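/- Let x_1, …, x_n (n > 1) be variables and let S_1, …, S_m (m > 3) be 3-element subsets of the variables such that each variable belongs to exactly three of the S_i. Fix a linear order ≺ on the variables and let A = {x_1, …, x_n}. Let D_1 be the district with candidate set C_1 = {s_1, …, s_m} (fresh candidates) and, for each i ∈ {1,…,m}, one vote whose top four candidates are the three members of S_i in ≺-increasing order followed by s_i, and three votes whose top candidate is s_i (remaining candidates below, arbitrary). Let D_2 be the district with candidate set C_2 = {t_1, …, t_m} (fresh candidates) and, for each i, one vote whose top four candidates are S_i in ≺-increasing order followed by t_i, one vote whose top four are S_i in ≺-decreasing order followed by t_i, and three votes whose top candidate is t_i. Then there exists X ⊆ A with |X ∩ S_i| = 1 for every i ∈ {1,…,m} if and only if there exists an assignment g : A → {1, 2} such that every a ∈ A is a 1-approval winner of the election (C_{g(a)} ∪ g⁻¹(g(a)), V_{g(a)}); i.e., if and only if (A, D_1, D_2) is a Yes-instance of 1-approval unbounded constructive recampaigning. -/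

import Mathlib

open Finset
open scoped Classical

noncomputable section

variable {Cand : Type*}

/-- `t`-approval score of `c` in the election `(F, V)`, where each vote is a linear order on
the candidate type: the number of votes in which fewer than `t` candidates of `F` are ranked
above `c`. -/
def approvalScore [DecidableEq Cand] (t : ℕ) (F : Finset Cand)
    (V : List (LinearOrder Cand)) (c : Cand) : ℕ :=
  (V.map fun v => if (F.filter fun b => v.lt b c).card < t then 1 else 0).sum

/-- `t`-approval winner set of the election `(F, V)`: the candidates of `F` with maximum
`t`-approval score. -/
def approvalWinners [DecidableEq Cand] (t : ℕ) (F : Finset Cand)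
    (V : List (LinearOrder Cand)) : Finset Cand :=
  F.filter fun c => ∀ b ∈ F, approvalScore t F V b ≤ approvalScore t F V c

/-- `IsTopSegment v F l` says that, within the candidate set `F`, the vote `v` ranks the
members of the list `l` at the top, in the order in which they are listed (all remaining
candidates of `F` are ranked below all of `l`, in arbitrary order). -/
def IsTopSegment (v : LinearOrder Cand) (F : Finset Cand) (l : List Cand) : Prop :=
  (∀ c ∈ l, c ∈ F) ∧ l.Chain' (fun a b => v.lt a b) ∧
    ∀ b ∈ F, b ∉ l → ∀ c ∈ l, v.lt c b

/-- `assignedTo A g i` is the set `A_i` of additional candidates assigned to district `i`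
by the assignment `g : A → {1, …, k}`. -/
def assignedTo [DecidableEq Cand] {k : ℕ} (A : Finset Cand)
    (g : {a // a ∈ A} → Fin k) (i : Fin k) : Finset Cand :=
  (A.attach.filter fun a => g a = i).image Subtype.val

/-- Yes-instance of unbounded constructive recampaigning (`E`-CRC). -/
def YesCRC [DecidableEq Cand] {Prof : Type*} (E : Finset Cand → Prof → Finset Cand) {k : ℕ}
    (C : Fin k → Finset Cand) (V : Fin k → Prof) (A : Finset Cand) : Prop :=
  ∃ g : {a // a ∈ A} → Fin k,
    ∀ a : {a // a ∈ A}, (a : Cand) ∈ E (C (g a) ∪ assignedTo A g (g a)) (V (g a))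

/-!
Under 1-approval a vote gives its point to the candidate it ranks first among those present.
In `D₁` the clause vote of `Sᵢ` goes to the `≺`-least variable of `Sᵢ` present, or to `sᵢ` if
there is none, and `sᵢ` always has the three points of its filler votes. Since every variable lies
in three clauses, a variable scores at most `3`, with equality iff it is the least present
variable of each of its clauses, while `sᵢ` scores `4` when no variable of `Sᵢ` is present. So
the variables sent to `D₁` win iff they meet every clause exactly once (two in a clause leave the
larger one below `3`), provided some variable is sent to `D₁` at all. In `D₂` each clause gives a
point to its least and to its greatest present variable: if every variable were sent to `D₂`,
the middle variable of a clause would score less than `3 = score(tᵢ)`; and if the variables in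
`D₂` meet every clause twice, every candidate of `D₂` scores exactly `3`.
-/

theorem List.Pairwise.rel_iff_of_pairwise {α : Type*} {R Q : α → α → Prop} {l : List α}
    (hR : l.Pairwise R) (hQ : l.Pairwise Q) (hR_asymm : ∀ a b, R a b → ¬ R b a)
    (hQ_asymm : ∀ a b, Q a b → ¬ Q b a) : ∀ a ∈ l, ∀ b ∈ l, R a b ↔ Q a b :=
  List.Pairwise.forall_of_forall_of_flip
    (fun a _ => iff_of_false (fun h => hR_asymm a a h h) (fun h => hQ_asymm a a h h))
    ((hR.and hQ).imp fun h => iff_of_true h.1 h.2)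
    ((hR.and hQ).imp fun h => iff_of_false (hR_asymm _ _ h.1) (hQ_asymm _ _ h.2))

theorem Finset.isLeast_or_isGreatest_of_card_le_two {α : Type*} [LinearOrder α] {T : Finset α}
    {a : α} (hT : T.card ≤ 2) (ha : a ∈ T) : IsLeast (↑T : Set α) a ∨ IsGreatest ↑T a := by
  by_contra! h
  obtain ⟨⟨b, hb, hba⟩, ⟨c, hc, hac⟩⟩ : (∃ b ∈ T, b < a) ∧ ∃ c ∈ T, a < c := by
    simpa [IsLeast, IsGreatest, lowerBounds, upperBounds, ha] using h
  have : 2 < T.card :=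
    two_lt_card.2 ⟨b, hb, a, ha, c, hc, hba.ne, (hba.trans hac).ne, hac.ne⟩
  omega

theorem Finset.not_isLeast_and_isGreatest_of_two_le_card {α : Type*} [LinearOrder α]
    {T : Finset α} {a : α} (hT : 2 ≤ T.card) : ¬ (IsLeast (↑T : Set α) a ∧ IsGreatest ↑T a) := by
  rintro ⟨hleast, hgreatest⟩
  obtain ⟨b, hb, c, hc, hbc⟩ := one_lt_card.1 hT
  have hb' : b = a := le_antisymm (hgreatest.2 hb) (hleast.2 hb)
  have hc' : c = a := le_antisymm (hgreatest.2 hc) (hleast.2 hc)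
  exact hbc (hb'.trans hc'.symm)

theorem Finset.exists_not_isLeast_and_not_isGreatest {α : Type*} [LinearOrder α] {T : Finset α}
    (hT : 3 ≤ T.card) : ∃ a ∈ T, ¬ IsLeast (↑T : Set α) a ∧ ¬ IsGreatest ↑T a := by
  have hne : T.Nonempty := card_pos.1 (by omega)
  obtain ⟨a, ha⟩ : (T \ {T.min' hne, T.max' hne}).Nonempty := by
    rw [← card_pos]
    have := le_card_sdiff {T.min' hne, T.max' hne} T
    have := card_le_two (a := T.min' hne) (b := T.max' hne)
    omega
  simp only [mem_sdiff, mem_insert, mem_singleton, not_or] at ha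
  exact ⟨a, ha.1, fun h => ha.2.1 (h.unique (T.isLeast_min' hne)),
    fun h => ha.2.2 (h.unique (T.isGreatest_max' hne))⟩

def IsRankedFirst (v : LinearOrder Cand) (F : Finset Cand) (c : Cand) : Prop :=
  ∀ b ∈ F, ¬ v.lt b c

theorem approvalScore_one_cons [DecidableEq Cand] (F : Finset Cand) (v : LinearOrder Cand)
    (V : List (LinearOrder Cand)) (c : Cand) :
    approvalScore 1 F (v :: V) c
      = (if IsRankedFirst v F c then 1 else 0) + approvalScore 1 F V c := by
  simp [approvalScore, IsRankedFirst, filter_eq_empty_iff]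

theorem approvalScore_one_flatMap [DecidableEq Cand] (F : Finset Cand) {k : ℕ}
    (f : Fin k → List (LinearOrder Cand)) (c : Cand) :
    approvalScore 1 F ((List.finRange k).flatMap f) c = ∑ i, approvalScore 1 F (f i) c := by
  rw [Fin.sum_univ_def, approvalScore, List.map_flatMap, List.flatMap, List.sum_flatten,
    List.map_map]
  rfl

theorem approvalScore_one_map_of_iff [DecidableEq Cand] (F : Finset Cand) {k : ℕ}
    (f : Fin k → LinearOrder Cand) (c : Cand) {P : Prop} (h : ∀ j, IsRankedFirst (f j) F c ↔ P) :
    approvalScore 1 F ((List.finRange k).map f) c = if P then k else 0 := by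
  have hterm : ∀ j, approvalScore 1 F [f j] c = if P then 1 else 0 := fun j => by
    simp only [approvalScore_one_cons, h j]; rfl
  rw [List.map_eq_flatMap, approvalScore_one_flatMap]
  simp [hterm]

theorem mem_approvalWinners [DecidableEq Cand] {t : ℕ} {F : Finset Cand}
    {V : List (LinearOrder Cand)} {c : Cand} :
    c ∈ approvalWinners t F V ↔ c ∈ F ∧ ∀ b ∈ F, approvalScore t F V b ≤ approvalScore t F V c :=
  mem_filter

theorem IsTopSegment.isRankedFirst_append_iff {v : LinearOrder Cand} {F F' : Finset Cand}
    {l : List Cand} {e c : Cand} {r : Cand → Cand → Prop} (h : IsTopSegment v F (l ++ [e]))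
    (hl : l.Pairwise r) (hr : ∀ a b, r a b → ¬ r b a) (hF' : F' ⊆ F) (he : e ∈ F')
    (hc : c ∈ F') :
    IsRankedFirst v F' c ↔ (c ∈ l ∧ ∀ b ∈ l, b ∈ F' → ¬ r b c) ∨ ((∀ b ∈ l, b ∉ F') ∧ c = e) := by
  obtain ⟨-, hchain, hbelow⟩ := h
  obtain ⟨hlv, -, hle⟩ := List.pairwise_append.1 (List.isChain_iff_pairwise.1 hchain)
  have hagree := hl.rel_iff_of_pairwise hlv hr fun _ _ => lt_asymm
  have hlast : ∀ b ∈ F', b ∉ l → b ≠ e → ∀ a ∈ l ++ [e], a < b := fun b hb hbl hbe =>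
    hbelow b (hF' hb) (by simp [hbl, hbe])
  constructor
  · intro hfirst
    by_cases hcl : c ∈ l
    · exact .inl ⟨hcl, fun b hb hbF hbc => hfirst b hbF ((hagree b hb c hcl).1 hbc)⟩
    by_cases hce : c = e
    · exact .inr ⟨fun b hb hbF => hfirst b hbF (hce ▸ hle b hb e (List.mem_singleton_self e)), hce⟩
    · exact absurd (hlast c hc hcl hce e (by simp)) (hfirst e he)
  · rintro (⟨hcl, hmin⟩ | ⟨hnone, rfl⟩) b hbF hbc
    · by_cases hbl : b ∈ l
      · exact hmin b hbl hbF ((hagree b hbl c hcl).2 hbc)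
      by_cases hbe : b = e
      · exact lt_asymm hbc (hbe ▸ hle c hcl e (List.mem_singleton_self e))
      · exact lt_asymm hbc (hlast b hbF hbl hbe c (by simp [hcl]))
    · by_cases hbl : b ∈ l
      · exact hnone b hbl hbF
      by_cases hbe : b = c
      · exact lt_irrefl b (hbe ▸ hbc)
      · exact lt_asymm hbc (hlast b hbF hbl hbe c (by simp))

theorem IsTopSegment.isRankedFirst_singleton_iff {v : LinearOrder Cand} {F F' : Finset Cand}
    {e c : Cand} (h : IsTopSegment v F [e]) (hF' : F' ⊆ F) (he : e ∈ F') (hc : c ∈ F') :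
    IsRankedFirst v F' c ↔ c = e := by
  simpa using IsTopSegment.isRankedFirst_append_iff (l := []) (r := fun _ _ => False) h
    List.Pairwise.nil (fun _ _ h => h.elim) hF' he hc

section Sorted

-- `v` is a local instance as well; declaring the ambient order after it makes `Finset.sort`,
-- `IsLeast` and `IsGreatest` below refer to the ambient order, not to the vote.
variable {v : LinearOrder Cand} [LinearOrder Cand] {F F' T : Finset Cand} {e c : Cand}

theorem IsTopSegment.isRankedFirst_sort_append_iff
    (h : IsTopSegment v F (T.sort (· ≤ ·) ++ [e])) (hF' : F' ⊆ F) (he : e ∈ F') (hc : c ∈ F') :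
    IsRankedFirst v F' c ↔ IsLeast (↑(T ∩ F') : Set Cand) c ∨ (T ∩ F' = ∅ ∧ c = e) := by
  rw [h.isRankedFirst_append_iff (T.sortedLT_sort).pairwise (fun _ _ => lt_asymm) hF' he hc]
  simp [IsLeast, lowerBounds, eq_empty_iff_forall_notMem, hc]

theorem IsTopSegment.isRankedFirst_sort_reverse_append_iff
    (h : IsTopSegment v F ((T.sort (· ≤ ·)).reverse ++ [e])) (hF' : F' ⊆ F) (he : e ∈ F')
    (hc : c ∈ F') :
    IsRankedFirst v F' c ↔ IsGreatest (↑(T ∩ F') : Set Cand) c ∨ (T ∩ F' = ∅ ∧ c = e) := by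
  rw [h.isRankedFirst_append_iff (List.pairwise_reverse.2 (T.sortedLT_sort).pairwise)
    (fun _ _ => lt_asymm) hF' he hc]
  simp [IsGreatest, upperBounds, eq_empty_iff_forall_notMem, hc]

end Sorted

theorem mem_assignedTo [DecidableEq Cand] {k : ℕ} {A : Finset Cand}
    {g : {a // a ∈ A} → Fin k} {i : Fin k} {b : Cand} :
    b ∈ assignedTo A g i ↔ ∃ h : b ∈ A, g ⟨b, h⟩ = i := by
  simp [assignedTo]

theorem assignedTo_one_eq_sdiff [DecidableEq Cand] {A : Finset Cand} (g : {a // a ∈ A} → Fin 2) :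
    assignedTo A g 1 = A \ assignedTo A g 0 := by
  ext b
  simp only [mem_assignedTo, mem_sdiff, not_exists]
  exact ⟨fun ⟨hb, h⟩ => ⟨hb, fun _ h' => by simp_all⟩,
    fun ⟨hb, h⟩ => ⟨hb, Fin.eq_one_of_ne_zero _ (h hb)⟩⟩

theorem yesCRC_fin_two_iff [DecidableEq Cand] {Prof : Type*}
    (E : Finset Cand → Prof → Finset Cand) (C : Fin 2 → Finset Cand) (V : Fin 2 → Prof)
    (A : Finset Cand) :
    YesCRC E C V A ↔ ∃ X ⊆ A, (∀ a ∈ X, a ∈ E (C 0 ∪ X) (V 0)) ∧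
      ∀ a ∈ A \ X, a ∈ E (C 1 ∪ (A \ X)) (V 1) := by
  constructor
  · rintro ⟨g, hg⟩
    refine ⟨assignedTo A g 0, fun b hb => (mem_assignedTo.1 hb).1, fun b hb => ?_, fun b hb => ?_⟩
    · obtain ⟨hbA, hgb⟩ := mem_assignedTo.1 hb
      simpa [hgb] using hg ⟨b, hbA⟩
    · rw [← assignedTo_one_eq_sdiff] at hb ⊢
      obtain ⟨hbA, hgb⟩ := mem_assignedTo.1 hb
      simpa [hgb] using hg ⟨b, hbA⟩
  · rintro ⟨X, hXA, hX, hAX⟩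
    let g : {a // a ∈ A} → Fin 2 := fun a => if (a : Cand) ∈ X then 0 else 1
    have hg0 : assignedTo A g 0 = X := by
      ext b
      simp only [mem_assignedTo, g]
      exact ⟨fun ⟨_, h⟩ => by by_contra hb; simp [hb] at h, fun hb => ⟨hXA hb, by simp [hb]⟩⟩
    refine ⟨g, fun a => ?_⟩
    by_cases ha : (a : Cand) ∈ X
    · simpa [g, ha, hg0] using hX a ha
    · simpa [g, ha, assignedTo_one_eq_sdiff, hg0] using hAX a (mem_sdiff.2 ⟨a.2, ha⟩)

section Reduction

variable [LinearOrder Cand] {m : ℕ} {A B : Finset Cand} {S : Fin m → Finset Cand}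
  {e : Fin m → Cand}

def districtOneVotes (u : Fin m → LinearOrder Cand) (w : Fin m → Fin 3 → LinearOrder Cand) :
    List (LinearOrder Cand) :=
  (List.finRange m).flatMap fun i => u i :: (List.finRange 3).map (w i)

def districtTwoVotes (u u' : Fin m → LinearOrder Cand) (w : Fin m → Fin 3 → LinearOrder Cand) :
    List (LinearOrder Cand) :=
  (List.finRange m).flatMap fun i => u i :: u' i :: (List.finRange 3).map (w i)

structure IsDistrictOne (A : Finset Cand) (S : Fin m → Finset Cand) (e : Fin m → Cand)
    (u : Fin m → LinearOrder Cand) (w : Fin m → Fin 3 → LinearOrder Cand) : Prop where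
  subset : ∀ i, S i ⊆ A
  notMem : ∀ i, e i ∉ A
  injective : Function.Injective e
  isTopSegment_clause : ∀ i, IsTopSegment (u i) (univ.image e ∪ A) ((S i).sort (· ≤ ·) ++ [e i])
  isTopSegment_filler : ∀ i j, IsTopSegment (w i j) (univ.image e ∪ A) [e i]

structure IsDistrictTwo (A : Finset Cand) (S : Fin m → Finset Cand) (e : Fin m → Cand)
    (u u' : Fin m → LinearOrder Cand) (w : Fin m → Fin 3 → LinearOrder Cand) : Prop where
  subset : ∀ i, S i ⊆ A
  notMem : ∀ i, e i ∉ A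
  injective : Function.Injective e
  isTopSegment_clause : ∀ i, IsTopSegment (u i) (univ.image e ∪ A) ((S i).sort (· ≤ ·) ++ [e i])
  isTopSegment_clause_reverse :
    ∀ i, IsTopSegment (u' i) (univ.image e ∪ A) (((S i).sort (· ≤ ·)).reverse ++ [e i])
  isTopSegment_filler : ∀ i j, IsTopSegment (w i j) (univ.image e ∪ A) [e i]

theorem inter_image_univ_union_eq (hSsub : ∀ i, S i ⊆ A) (heA : ∀ i, e i ∉ A) (i : Fin m) :
    S i ∩ (univ.image e ∪ B) = S i ∩ B := by
  rw [inter_union_distrib_left, disjoint_iff_inter_eq_empty.1, empty_union]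
  exact disjoint_left.2 fun a ha ha' => by
    obtain ⟨j, -, rfl⟩ := mem_image.1 ha'
    exact heA j (hSsub i ha)

theorem apply_mem_image_univ_union (e : Fin m → Cand) (B : Finset Cand) (i : Fin m) :
    e i ∈ univ.image e ∪ B :=
  mem_union_left _ (mem_image_of_mem e (mem_univ i))

section DistrictOne

variable {u : Fin m → LinearOrder Cand} {w : Fin m → Fin 3 → LinearOrder Cand}

theorem IsDistrictOne.approvalScore_eq_sum (h : IsDistrictOne A S e u w) (hB : B ⊆ A) {c : Cand}
    (hc : c ∈ univ.image e ∪ B) :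
    approvalScore 1 (univ.image e ∪ B) (districtOneVotes u w) c =
      ∑ i, ((if IsLeast (↑(S i ∩ B) : Set Cand) c ∨ (S i ∩ B = ∅ ∧ c = e i) then 1 else 0) +
        if c = e i then 3 else 0) := by
  have hF : univ.image e ∪ B ⊆ univ.image e ∪ A := union_subset_union_right hB
  have he := apply_mem_image_univ_union e B
  rw [districtOneVotes, approvalScore_one_flatMap]
  refine sum_congr rfl fun i _ => ?_
  rw [approvalScore_one_cons,
    (h.isTopSegment_clause i).isRankedFirst_sort_append_iff hF (he i) hc,
    approvalScore_one_map_of_iff _ _ _ fun j =>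
      (h.isTopSegment_filler i j).isRankedFirst_singleton_iff hF (he i) hc,
    inter_image_univ_union_eq h.subset h.notMem]
  congr

theorem IsDistrictOne.approvalScore_clause (h : IsDistrictOne A S e u w) (hB : B ⊆ A)
    (j : Fin m) :
    approvalScore 1 (univ.image e ∪ B) (districtOneVotes u w) (e j) =
      3 + if S j ∩ B = ∅ then 1 else 0 := by
  have hleast : ∀ i, ¬ IsLeast (↑(S i ∩ B) : Set Cand) (e j) :=
    fun i hl => h.notMem j (h.subset i (mem_inter.1 hl.1).1)
  rw [h.approvalScore_eq_sum hB (apply_mem_image_univ_union e B j), sum_eq_single j]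
  · simp only [hleast, and_true, false_or, if_pos, add_comm]
  · intro i _ hij
    simp only [hleast, h.injective.ne (Ne.symm hij), and_false, or_self, if_false, add_zero]
  · simp

theorem IsDistrictOne.approvalScore_of_mem (h : IsDistrictOne A S e u w) (hB : B ⊆ A)
    {a : Cand} (ha : a ∈ B) :
    approvalScore 1 (univ.image e ∪ B) (districtOneVotes u w) a =
      #{i | IsLeast (↑(S i ∩ B) : Set Cand) a} := by
  have hne : ∀ i, a ≠ e i := fun i hai => h.notMem i (hai ▸ hB ha)
  rw [h.approvalScore_eq_sum hB (mem_union_right _ ha)]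
  simp [hne, sum_boole]

theorem IsDistrictOne.approvalScore_of_mem_le (h : IsDistrictOne A S e u w)
    (hocc : ∀ a ∈ A, #{i | a ∈ S i} = 3) (hB : B ⊆ A) {a : Cand} (ha : a ∈ B) :
    approvalScore 1 (univ.image e ∪ B) (districtOneVotes u w) a ≤ 3 := by
  rw [h.approvalScore_of_mem hB ha, ← hocc a (hB ha)]
  exact card_le_card (monotone_filter_right _ fun i _ hl => (mem_inter.1 hl.1).1)

theorem IsDistrictOne.approvalScore_of_mem_lt (h : IsDistrictOne A S e u w)
    (hocc : ∀ a ∈ A, #{i | a ∈ S i} = 3) (hB : B ⊆ A) {a : Cand} {i : Fin m}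
    (ha : a ∈ S i ∩ B) (hleast : ¬ IsLeast (↑(S i ∩ B) : Set Cand) a) :
    approvalScore 1 (univ.image e ∪ B) (districtOneVotes u w) a < 3 := by
  rw [h.approvalScore_of_mem hB (mem_inter.1 ha).2, ← hocc a (hB (mem_inter.1 ha).2)]
  refine card_lt_card ((ssubset_iff_of_subset
    (monotone_filter_right _ fun j _ hl => (mem_inter.1 hl.1).1)).2 ⟨i, ?_, ?_⟩)
  · simpa using (mem_inter.1 ha).1
  · simpa using hleast

theorem IsDistrictOne.mem_approvalWinners_of_card_inter_eq_one (h : IsDistrictOne A S e u w)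
    (hocc : ∀ a ∈ A, #{i | a ∈ S i} = 3) {X : Finset Cand} (hXA : X ⊆ A)
    (hX : ∀ i, (X ∩ S i).card = 1) {a : Cand} (ha : a ∈ X) :
    a ∈ approvalWinners 1 (univ.image e ∪ X) (districtOneVotes u w) := by
  have hscore : approvalScore 1 (univ.image e ∪ X) (districtOneVotes u w) a = 3 := by
    rw [h.approvalScore_of_mem hXA ha, ← hocc a (hXA ha)]
    congr 1
    refine filter_congr fun i _ => ⟨fun hl => (mem_inter.1 hl.1).1, fun hai => ?_⟩
    obtain ⟨x, hx⟩ := card_eq_one.1 (hX i)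
    obtain rfl : a = x := mem_singleton.1 (hx ▸ mem_inter.2 ⟨ha, hai⟩)
    rw [inter_comm, hx, coe_singleton]
    exact isLeast_singleton
  refine mem_approvalWinners.2 ⟨mem_union_right _ ha, fun b hb => ?_⟩
  rw [hscore]
  rcases mem_union.1 hb with hb | hb
  · obtain ⟨j, -, rfl⟩ := mem_image.1 hb
    have : S j ∩ X ≠ ∅ := (card_pos.1 (by rw [inter_comm, hX j]; omega)).ne_empty
    simp [h.approvalScore_clause hXA, this]
  · exact h.approvalScore_of_mem_le hocc hXA hb

theorem IsDistrictOne.inter_nonempty_of_mem_approvalWinners (h : IsDistrictOne A S e u w)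
    (hocc : ∀ a ∈ A, #{i | a ∈ S i} = 3) (hB : B ⊆ A) {a : Cand} (ha : a ∈ B)
    (hwin : a ∈ approvalWinners 1 (univ.image e ∪ B) (districtOneVotes u w)) (i : Fin m) :
    (S i ∩ B).Nonempty := by
  rw [nonempty_iff_ne_empty]
  intro hempty
  have hle := (mem_approvalWinners.1 hwin).2 (e i) (apply_mem_image_univ_union e B i)
  rw [h.approvalScore_clause hB, if_pos hempty] at hle
  have := h.approvalScore_of_mem_le hocc hB ha
  omega

theorem IsDistrictOne.card_inter_le_one_of_forall_mem_approvalWinners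
    (h : IsDistrictOne A S e u w) (hocc : ∀ a ∈ A, #{i | a ∈ S i} = 3) (hB : B ⊆ A)
    (hwin : ∀ a ∈ B, a ∈ approvalWinners 1 (univ.image e ∪ B) (districtOneVotes u w))
    (i : Fin m) : (S i ∩ B).card ≤ 1 := by
  by_contra! htwo
  have hne : (S i ∩ B).Nonempty := card_pos.1 (by omega)
  have ha := max'_mem _ hne
  have hleast : ¬ IsLeast (↑(S i ∩ B) : Set Cand) ((S i ∩ B).max' hne) := fun hl =>
    not_isLeast_and_isGreatest_of_two_le_card htwo ⟨hl, isGreatest_max' _ hne⟩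
  have hlt := h.approvalScore_of_mem_lt hocc hB ha hleast
  have hle := (mem_approvalWinners.1 (hwin _ (mem_inter.1 ha).2)).2 (e i)
    (apply_mem_image_univ_union e B i)
  rw [h.approvalScore_clause hB] at hle
  omega

end DistrictOne

section DistrictTwo

variable {u u' : Fin m → LinearOrder Cand} {w : Fin m → Fin 3 → LinearOrder Cand}

theorem IsDistrictTwo.approvalScore_eq_sum (h : IsDistrictTwo A S e u u' w) (hB : B ⊆ A)
    {c : Cand} (hc : c ∈ univ.image e ∪ B) :
    approvalScore 1 (univ.image e ∪ B) (districtTwoVotes u u' w) c =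
      ∑ i, ((if IsLeast (↑(S i ∩ B) : Set Cand) c ∨ (S i ∩ B = ∅ ∧ c = e i) then 1 else 0) +
        ((if IsGreatest (↑(S i ∩ B) : Set Cand) c ∨ (S i ∩ B = ∅ ∧ c = e i) then 1 else 0) +
          if c = e i then 3 else 0)) := by
  have hF : univ.image e ∪ B ⊆ univ.image e ∪ A := union_subset_union_right hB
  have he := apply_mem_image_univ_union e B
  rw [districtTwoVotes, approvalScore_one_flatMap]
  refine sum_congr rfl fun i _ => ?_
  rw [approvalScore_one_cons, approvalScore_one_cons,
    (h.isTopSegment_clause i).isRankedFirst_sort_append_iff hF (he i) hc,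
    (h.isTopSegment_clause_reverse i).isRankedFirst_sort_reverse_append_iff hF (he i) hc,
    approvalScore_one_map_of_iff _ _ _ fun j =>
      (h.isTopSegment_filler i j).isRankedFirst_singleton_iff hF (he i) hc,
    inter_image_univ_union_eq h.subset h.notMem]
  congr

theorem IsDistrictTwo.approvalScore_clause (h : IsDistrictTwo A S e u u' w) (hB : B ⊆ A)
    (j : Fin m) :
    approvalScore 1 (univ.image e ∪ B) (districtTwoVotes u u' w) (e j) =
      3 + if S j ∩ B = ∅ then 2 else 0 := by
  have hleast : ∀ i, ¬ IsLeast (↑(S i ∩ B) : Set Cand) (e j) :=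
    fun i hl => h.notMem j (h.subset i (mem_inter.1 hl.1).1)
  have hgreatest : ∀ i, ¬ IsGreatest (↑(S i ∩ B) : Set Cand) (e j) :=
    fun i hg => h.notMem j (h.subset i (mem_inter.1 hg.1).1)
  rw [h.approvalScore_eq_sum hB (apply_mem_image_univ_union e B j), sum_eq_single j]
  · simp only [hleast, hgreatest, and_true, false_or, if_pos]
    split_ifs <;> rfl
  · intro i _ hij
    simp only [hleast, hgreatest, h.injective.ne (Ne.symm hij), and_false, or_self, if_false,
      add_zero]
  · simp

theorem IsDistrictTwo.approvalScore_of_mem_of_two_le_card (h : IsDistrictTwo A S e u u' w)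
    (hB : B ⊆ A) (h2 : ∀ i, 2 ≤ #(S i ∩ B)) {a : Cand} (ha : a ∈ B) :
    approvalScore 1 (univ.image e ∪ B) (districtTwoVotes u u' w) a =
      #{i | IsLeast (↑(S i ∩ B) : Set Cand) a ∨ IsGreatest (↑(S i ∩ B) : Set Cand) a} := by
  have hne : ∀ i, a ≠ e i := fun i hai => h.notMem i (hai ▸ hB ha)
  rw [h.approvalScore_eq_sum hB (mem_union_right _ ha), filter_or, card_union_of_disjoint
    (disjoint_filter.2 fun i _ hl hg => not_isLeast_and_isGreatest_of_two_le_card (h2 i) ⟨hl, hg⟩)]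
  simp [hne, sum_add_distrib, sum_boole]

theorem IsDistrictTwo.mem_approvalWinners_of_card_inter_eq_one (h : IsDistrictTwo A S e u u' w)
    (hS3 : ∀ i, (S i).card = 3) (hocc : ∀ a ∈ A, #{i | a ∈ S i} = 3) {X : Finset Cand}
    (hX : ∀ i, (X ∩ S i).card = 1) {a : Cand} (ha : a ∈ A \ X) :
    a ∈ approvalWinners 1 (univ.image e ∪ (A \ X)) (districtTwoVotes u u' w) := by
  have hcard : ∀ i, #(S i ∩ (A \ X)) = 2 := fun i => by
    rw [← inter_sdiff_assoc, inter_eq_left.2 (h.subset i), card_sdiff, hS3, hX]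
  have hscore : ∀ b ∈ A \ X,
      approvalScore 1 (univ.image e ∪ (A \ X)) (districtTwoVotes u u' w) b = 3 := by
    intro b hb
    rw [h.approvalScore_of_mem_of_two_le_card sdiff_subset (fun i => (hcard i).ge) hb,
      ← hocc b (mem_sdiff.1 hb).1]
    congr 1
    refine filter_congr fun i _ => ⟨?_, fun hbi =>
      isLeast_or_isGreatest_of_card_le_two (hcard i).le (mem_inter.2 ⟨hbi, hb⟩)⟩
    rintro (hl | hg)
    exacts [(mem_inter.1 hl.1).1, (mem_inter.1 hg.1).1]
  refine mem_approvalWinners.2 ⟨mem_union_right _ ha, fun b hb => ?_⟩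
  rw [hscore a ha]
  rcases mem_union.1 hb with hb | hb
  · obtain ⟨j, -, rfl⟩ := mem_image.1 hb
    have : S j ∩ (A \ X) ≠ ∅ := (card_pos.1 (by rw [hcard j]; omega)).ne_empty
    simp [h.approvalScore_clause sdiff_subset, this]
  · exact (hscore b hb).le

theorem IsDistrictTwo.exists_notMem_approvalWinners (h : IsDistrictTwo A S e u u' w)
    (hS3 : ∀ i, (S i).card = 3) (hocc : ∀ a ∈ A, #{i | a ∈ S i} = 3) (i : Fin m) :
    ∃ a ∈ A, a ∉ approvalWinners 1 (univ.image e ∪ A) (districtTwoVotes u u' w) := by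
  have hSA : ∀ j, S j ∩ A = S j := fun j => inter_eq_left.2 (h.subset j)
  obtain ⟨y, hy, hyl, hyg⟩ := exists_not_isLeast_and_not_isGreatest (hS3 i).ge
  refine ⟨y, h.subset i hy, fun hwin => ?_⟩
  have hlt : approvalScore 1 (univ.image e ∪ A) (districtTwoVotes u u' w) y < 3 := by
    rw [h.approvalScore_of_mem_of_two_le_card subset_rfl (fun j => by rw [hSA, hS3]; omega)
      (h.subset i hy), ← hocc y (h.subset i hy)]
    simp only [hSA]
    refine card_lt_card ((ssubset_iff_of_subset (monotone_filter_right _ fun j _ hj => ?_)).2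
      ⟨i, by simpa using hy, by simpa using ⟨hyl, hyg⟩⟩)
    rcases hj with hl | hg
    exacts [hl.1, hg.1]
  have hle := (mem_approvalWinners.1 hwin).2 (e i) (apply_mem_image_univ_union e A i)
  rw [h.approvalScore_clause subset_rfl] at hle
  omega

end DistrictTwo

end Reduction

theorem one_in_three_sat_iff_one_approval_crc_general [LinearOrder Cand]
    (m : ℕ)
    (A : Finset Cand)
    (S : Fin m → Finset Cand) (hSsub : ∀ i, S i ⊆ A) (hS3 : ∀ i, (S i).card = 3)
    (hocc : ∀ a ∈ A, (Finset.univ.filter fun i : Fin m => a ∈ S i).card = 3)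
    (s t : Fin m → Cand) (hs : Function.Injective s) (ht : Function.Injective t)
    (hsA : ∀ i, s i ∉ A) (htA : ∀ i, t i ∉ A)
    (u : Fin m → LinearOrder Cand) (w : Fin m → Fin 3 → LinearOrder Cand)
    (u' u'' : Fin m → LinearOrder Cand) (w' : Fin m → Fin 3 → LinearOrder Cand)
    (hu : ∀ i, IsTopSegment (u i) (Finset.univ.image s ∪ A)
      ((S i).sort (· ≤ ·) ++ [s i]))
    (hw : ∀ i j, IsTopSegment (w i j) (Finset.univ.image s ∪ A) [s i])
    (hu' : ∀ i, IsTopSegment (u' i) (Finset.univ.image t ∪ A)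
      ((S i).sort (· ≤ ·) ++ [t i]))
    (hu'' : ∀ i, IsTopSegment (u'' i) (Finset.univ.image t ∪ A)
      (((S i).sort (· ≤ ·)).reverse ++ [t i]))
    (hw' : ∀ i j, IsTopSegment (w' i j) (Finset.univ.image t ∪ A) [t i]) :
    (∃ X ⊆ A, ∀ i : Fin m, (X ∩ S i).card = 1) ↔
      YesCRC (fun F V => approvalWinners 1 F V)
        (![Finset.univ.image s, Finset.univ.image t] : Fin 2 → Finset Cand)
        (![(List.finRange m).flatMap (fun i => u i :: (List.finRange 3).map (w i)),
           (List.finRange m).flatMap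
             (fun i => u' i :: u'' i :: (List.finRange 3).map (w' i))] :
          Fin 2 → List (LinearOrder Cand))
        A := by
  have h₁ : IsDistrictOne A S s u w := ⟨hSsub, hsA, hs, hu, hw⟩
  have h₂ : IsDistrictTwo A S t u' u'' w' := ⟨hSsub, htA, ht, hu', hu'', hw'⟩
  rw [yesCRC_fin_two_iff]
  constructor
  · rintro ⟨X, hXA, hX⟩
    exact ⟨X, hXA, fun a ha => h₁.mem_approvalWinners_of_card_inter_eq_one hocc hXA hX ha,
      fun a ha => h₂.mem_approvalWinners_of_card_inter_eq_one hS3 hocc hX ha⟩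
  · rintro ⟨X, hXA, hwin₁, hwin₂⟩
    refine ⟨X, hXA, fun i => ?_⟩
    obtain ⟨a, ha⟩ : X.Nonempty := by
      rw [nonempty_iff_ne_empty]
      rintro rfl
      obtain ⟨a, ha, hlose⟩ := h₂.exists_notMem_approvalWinners hS3 hocc i
      have hwin := hwin₂ a (by rwa [sdiff_empty])
      rw [sdiff_empty] at hwin
      exact hlose hwin
    have hne := h₁.inter_nonempty_of_mem_approvalWinners hocc hXA ha (hwin₁ a ha) i
    have hle := h₁.card_inter_le_one_of_forall_mem_approvalWinners hocc hXA hwin₁ i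
    rw [inter_comm]
    exact le_antisymm hle (card_pos.2 hne)

/-- correctness of the E3-1/3-SAT⁺ reduction in Theorem 8: with variables
`A` (`|A| = n > 1`), clauses `S_1, …, S_m` (`m > 3`, each a 3-subset of `A`, each variable in
exactly three clauses), district `D_1` over fresh candidates `s_1, …, s_m` with, for each
`i`, one vote topped by `S_i` in ≺-increasing order followed by `s_i` and three votes topped
by `s_i`, and district `D_2` over fresh candidates `t_1, …, t_m` with, for each `i`, one vote
topped by `S_i` increasing then `t_i`, one topped by `S_i` decreasing then `t_i`, and three
votes topped by `t_i`: there is an `X ⊆ A` with `|X ∩ S_i| = 1` for every `i` if and only if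
`(A, D_1, D_2)` is a Yes-instance of 1-approval unbounded constructive recampaigning. -/
theorem one_in_three_sat_iff_one_approval_crc [LinearOrder Cand]
    (n m : ℕ) (hn : 1 < n) (hm : 3 < m)
    (A : Finset Cand) (hA : A.card = n)
    (S : Fin m → Finset Cand) (hSsub : ∀ i, S i ⊆ A) (hS3 : ∀ i, (S i).card = 3)
    (hocc : ∀ a ∈ A, (Finset.univ.filter fun i : Fin m => a ∈ S i).card = 3)
    (s t : Fin m → Cand) (hs : Function.Injective s) (ht : Function.Injective t)
    (hsA : ∀ i, s i ∉ A) (htA : ∀ i, t i ∉ A)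
    (u : Fin m → LinearOrder Cand) (w : Fin m → Fin 3 → LinearOrder Cand)
    (u' u'' : Fin m → LinearOrder Cand) (w' : Fin m → Fin 3 → LinearOrder Cand)
    (hu : ∀ i, IsTopSegment (u i) (Finset.univ.image s ∪ A)
      ((S i).sort (· ≤ ·) ++ [s i]))
    (hw : ∀ i j, IsTopSegment (w i j) (Finset.univ.image s ∪ A) [s i])
    (hu' : ∀ i, IsTopSegment (u' i) (Finset.univ.image t ∪ A)
      ((S i).sort (· ≤ ·) ++ [t i]))
    (hu'' : ∀ i, IsTopSegment (u'' i) (Finset.univ.image t ∪ A)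
      (((S i).sort (· ≤ ·)).reverse ++ [t i]))
    (hw' : ∀ i j, IsTopSegment (w' i j) (Finset.univ.image t ∪ A) [t i]) :
    (∃ X ⊆ A, ∀ i : Fin m, (X ∩ S i).card = 1) ↔
      YesCRC (fun F V => approvalWinners 1 F V)
        (![Finset.univ.image s, Finset.univ.image t] : Fin 2 → Finset Cand)
        (![(List.finRange m).flatMap (fun i => u i :: (List.finRange 3).map (w i)),
           (List.finRange m).flatMap
             (fun i => u' i :: u'' i :: (List.finRange 3).map (w' i))] :
          Fin 2 → List (LinearOrder Cand))
        A :=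
  one_in_three_sat_iff_one_approval_crc_general m A S hSsub hS3 hocc s t hs ht hsA htA u w u' u'' w'
    hu hw hu' hu'' hw'

end
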